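/- Let p ∈ ℝ, a ≠ 2, and let f be a probability density function on (x_i, x_f) that is differentiable with f'(x) < 0 on (x_i, x_f) and satisfies lim_{x→x_f} f(x)^{2−a} = 0. Then the down-moment with b = 1 reduces to a power of the Rényi entropy power: Ξ_{p,a,1}[f] = ∫ |∫_x^{x_f} f(t)^{1−a} |f'(t)| dt|^p f(x) dx = |2−a|^{−p} ∫ f(x)^{1+p(2−a)} dx, whenever the integrals are finite. -/

import Mathlib

open MeasureTheory Set Filter Topology

noncomputable section

/-- The open interval with extended-real endpoints, viewed as a set of reals. -/
def intIoo (a b : EReal) : Set ℝ := {x : ℝ | a < (x : EReal) ∧ (x : EReal) < b}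

/-! On `(x, x_f)` the integrand `f^(1-a) |f'| = -f^(1-a) f'` is the derivative of
`-f^(2-a) / (2-a)`, which tends to `0` at `x_f`; so the inner integral is `f(x)^(2-a) / (2-a)`
and the down-moment integrand is pointwise `(2-a)^(-p) f^(1+p(2-a))`. Here `2 - a > 0` is forced:
`f` is positive and strictly decreasing, so for `a ≥ 2` the power `f^(2-a)` would stay bounded
away from `0` near `x_f`. -/

lemma isOpen_intIoo (a b : EReal) : IsOpen (intIoo a b) :=
  isOpen_Ioo.preimage continuous_coe_real_ereal

lemma measurableSet_intIoo (a b : EReal) : MeasurableSet (intIoo a b) :=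
  (isOpen_intIoo a b).measurableSet

lemma ordConnected_intIoo (a b : EReal) : (intIoo a b).OrdConnected :=
  ⟨fun _ hx _ hy _ ht => ⟨hx.1.trans_le (EReal.coe_le_coe ht.1),
    (EReal.coe_le_coe ht.2).trans_lt hy.2⟩⟩

lemma intIoo_coe_top (x : ℝ) : intIoo (x : EReal) ⊤ = Ioi x := by
  ext t; simp [intIoo]

lemma intIoo_coe_coe (x r : ℝ) : intIoo (x : EReal) (r : EReal) = Ioo x r := by
  ext t; simp [intIoo]

lemma tendsto_coe_atTop_nhdsLT_top :
    Tendsto (fun x : ℝ => (x : EReal)) atTop (𝓝[<] ⊤) := by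
  refine tendsto_nhdsWithin_of_tendsto_nhds_of_eventually_within _ ?_
    (Eventually.of_forall EReal.coe_lt_top)
  rw [EReal.tendsto_nhds_top_iff_real]
  exact fun y => (eventually_gt_atTop y).mono fun t ht => EReal.coe_lt_coe ht

lemma tendsto_coe_nhdsLT_coe (r : ℝ) :
    Tendsto (fun x : ℝ => (x : EReal)) (𝓝[<] r) (𝓝[<] (r : EReal)) :=
  tendsto_nhdsWithin_of_tendsto_nhds_of_eventually_within _
    (EReal.tendsto_coe.mpr (tendsto_id.mono_left nhdsWithin_le_nhds))
    (eventually_nhdsWithin_of_forall fun _ ht => EReal.coe_lt_coe ht)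

lemma comap_coe_nhdsLT_neBot {x : ℝ} {b : EReal} (hxb : (x : EReal) < b) :
    (comap (fun y : ℝ => (y : EReal)) (𝓝[<] b)).NeBot := by
  induction b with
  | bot => exact absurd hxb not_lt_bot
  | coe r => exact neBot_of_le (tendsto_iff_comap.mp (tendsto_coe_nhdsLT_coe r))
  | top => exact neBot_of_le (tendsto_iff_comap.mp tendsto_coe_atTop_nhdsLT_top)

theorem integral_intIoo_of_hasDerivAt_of_tendsto {g G : ℝ → ℝ} {x m : ℝ} {b : EReal}
    (hxb : (x : EReal) < b) (hderiv : ∀ t : ℝ, x ≤ t → (t : EReal) < b → HasDerivAt g (G t) t)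
    (hint : IntegrableOn G (intIoo x b))
    (hlim : Tendsto g (comap (fun y : ℝ => (y : EReal)) (𝓝[<] b)) (𝓝 m)) :
    ∫ t in intIoo x b, G t = m - g x := by
  induction b with
  | bot => exact absurd hxb not_lt_bot
  | top =>
    rw [intIoo_coe_top] at hint ⊢
    exact integral_Ioi_of_hasDerivAt_of_tendsto' (fun t ht => hderiv t ht (EReal.coe_lt_top t))
      hint (hlim.mono_left (tendsto_iff_comap.mp tendsto_coe_atTop_nhdsLT_top))
  | coe r =>
    rw [intIoo_coe_coe] at hint ⊢
    have hxr : x < r := EReal.coe_lt_coe_iff.mp hxb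
    rw [← integral_Ioc_eq_integral_Ioo, ← intervalIntegral.integral_of_le hxr.le]
    refine intervalIntegral.integral_eq_sub_of_hasDerivAt_of_tendsto hxr
      (fun t ht => hderiv t ht.1.le (EReal.coe_lt_coe ht.2)) ?_
      ((hderiv x le_rfl hxb).continuousAt.tendsto.mono_left nhdsWithin_le_nhds)
      (hlim.mono_left (tendsto_iff_comap.mp (tendsto_coe_nhdsLT_coe r)))
    exact (intervalIntegrable_iff_integrableOn_Ioo_of_le hxr.le).mpr hint

lemma pos_of_tendsto_rpow_zero {α : Type*} {L : Filter α} [L.NeBot] {u : α → ℝ} {c e : ℝ}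
    (hc : 0 < c) (hu : ∀ᶠ y in L, 0 < u y ∧ u y ≤ c)
    (hlim : Tendsto (fun y => u y ^ e) L (𝓝 0)) : 0 < e := by
  by_contra! he
  have hbound : ∀ᶠ y in L, c ^ e ≤ u y ^ e :=
    hu.mono fun y hy => Real.rpow_le_rpow_of_nonpos hy.1 hy.2 he
  linarith [ge_of_tendsto hlim hbound, Real.rpow_pos_of_pos hc e]

lemma HasDerivAt.neg_rpow_div {f : ℝ → ℝ} {d t q : ℝ} (hf : HasDerivAt f d t)
    (hpos : 0 < f t) (hd : d < 0) (hq : q ≠ 0) :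
    HasDerivAt (fun u => -(f u ^ q / q)) (f t ^ (q - 1) * |d|) t := by
  refine ((hf.rpow_const (Or.inl hpos.ne')).div_const q).neg.congr_deriv ?_
  rw [abs_of_neg hd]
  field_simp

lemma abs_rpow_div_rpow_mul_self {y q : ℝ} (p : ℝ) (hy : 0 < y) (hq : 0 < q) :
    |y ^ q / q| ^ p * y = q ^ (-p) * y ^ (1 + p * q) := by
  rw [abs_of_pos (div_pos (Real.rpow_pos_of_pos hy q) hq),
    Real.div_rpow (Real.rpow_pos_of_pos hy q).le hq.le, ← Real.rpow_mul hy.le,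
    Real.rpow_neg hq.le, Real.rpow_add hy, Real.rpow_one, mul_comm q p]
  ring

section Decreasing

variable {f f' : ℝ → ℝ} {xi xf : EReal}

lemma strictAntiOn_intIoo (hf' : ∀ x ∈ intIoo xi xf, HasDerivAt f (f' x) x)
    (hf'_neg : ∀ x ∈ intIoo xi xf, f' x < 0) : StrictAntiOn f (intIoo xi xf) := by
  have hinterior : interior (intIoo xi xf) = intIoo xi xf := (isOpen_intIoo xi xf).interior_eq
  refine strictAntiOn_of_hasDerivWithinAt_neg (f' := f') (ordConnected_intIoo xi xf).convex
    (fun x hx => (hf' x hx).continuousAt.continuousWithinAt) (fun x hx => ?_) (fun x hx => ?_)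
  · rw [hinterior] at hx ⊢
    exact (hf' x hx).hasDerivWithinAt
  · rw [hinterior] at hx
    exact hf'_neg x hx

lemma StrictAntiOn.pos_of_mem_intIoo (hanti : StrictAntiOn f (intIoo xi xf))
    (hf_nonneg : ∀ x, 0 ≤ f x) {x : ℝ} (hx : x ∈ intIoo xi xf) : 0 < f x := by
  obtain ⟨y, hxy, hyf⟩ := EReal.exists_between_coe_real hx.2
  exact (hf_nonneg y).trans_lt
    (hanti hx ⟨hx.1.trans hxy, hyf⟩ (EReal.coe_lt_coe_iff.mp hxy))

lemma StrictAntiOn.exponent_pos_of_tendsto_rpow (hanti : StrictAntiOn f (intIoo xi xf))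
    (hf_nonneg : ∀ x, 0 ≤ f x) {x e : ℝ} (hx : x ∈ intIoo xi xf)
    (hlim : Tendsto (fun y => f y ^ e) (comap (fun y : ℝ => (y : EReal)) (𝓝[<] xf)) (𝓝 0)) :
    0 < e := by
  have := comap_coe_nhdsLT_neBot hx.2
  refine pos_of_tendsto_rpow_zero (hanti.pos_of_mem_intIoo hf_nonneg hx) ?_ hlim
  filter_upwards [preimage_mem_comap (Ioo_mem_nhdsLT hx.2)] with y hy
  have hy' : y ∈ intIoo xi xf := ⟨hx.1.trans hy.1, hy.2⟩
  exact ⟨hanti.pos_of_mem_intIoo hf_nonneg hy',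
    (hanti hx hy' (EReal.coe_lt_coe_iff.mp hy.1)).le⟩

lemma integral_intIoo_rpow_mul_abs_deriv {a x : ℝ} (ha : a ≠ 2)
    (hf' : ∀ x ∈ intIoo xi xf, HasDerivAt f (f' x) x) (hf'_neg : ∀ x ∈ intIoo xi xf, f' x < 0)
    (hpos : ∀ x ∈ intIoo xi xf, 0 < f x)
    (hlim : Tendsto (fun x => f x ^ (2 - a)) (comap (fun x : ℝ => (x : EReal)) (𝓝[<] xf)) (𝓝 0))
    (hx : x ∈ intIoo xi xf)
    (hint : IntegrableOn (fun t => f t ^ (1 - a) * |f' t|) (intIoo (x : EReal) xf)) :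
    ∫ t in intIoo (x : EReal) xf, f t ^ (1 - a) * |f' t| = f x ^ (2 - a) / (2 - a) := by
  have hq : 2 - a ≠ 0 := sub_ne_zero.mpr ha.symm
  have hderiv : ∀ t : ℝ, x ≤ t → (t : EReal) < xf →
      HasDerivAt (fun u => -(f u ^ (2 - a) / (2 - a))) (f t ^ (1 - a) * |f' t|) t := by
    intro t hxt htf
    have ht : t ∈ intIoo xi xf := ⟨hx.1.trans_le (EReal.coe_le_coe hxt), htf⟩
    have h := (hf' t ht).neg_rpow_div (hpos t ht) (hf'_neg t ht) hq
    rwa [show 2 - a - 1 = 1 - a by ring] at h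
  rw [integral_intIoo_of_hasDerivAt_of_tendsto hx.2 hderiv hint
    (by simpa using (hlim.div_const (2 - a)).neg)]
  ring

end Decreasing

theorem down_moment_b_one_reduces_to_entropy_general
    (p a : ℝ)
    (xi xf : EReal)
    (f f' : ℝ → ℝ)
    (hf_nonneg : ∀ x, 0 ≤ f x)
    (hf' : ∀ x ∈ intIoo xi xf, HasDerivAt f (f' x) x)
    (hf'_neg : ∀ x ∈ intIoo xi xf, f' x < 0)
    (hlim : Tendsto (fun x => f x ^ (2 - a))
      (Filter.comap (fun x : ℝ => (x : EReal)) (𝓝[<] xf)) (𝓝 0))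
    (hfin_inner : ∀ x ∈ intIoo xi xf,
      IntegrableOn (fun t => f t ^ (1 - a) * |f' t|) (intIoo (x : EReal) xf)) :
    (∫ x in intIoo xi xf,
        |(∫ t in intIoo (x : EReal) xf, f t ^ (1 - a) * |f' t|)| ^ p * f x)
      = |2 - a| ^ (-p) * ∫ x in intIoo xi xf, f x ^ (1 + p * (2 - a)) := by
  have hanti := strictAntiOn_intIoo hf' hf'_neg
  have hpos : ∀ x ∈ intIoo xi xf, 0 < f x := fun x hx => hanti.pos_of_mem_intIoo hf_nonneg hx
  have hpointwise : EqOn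
      (fun x : ℝ => |(∫ t in intIoo (x : EReal) xf, f t ^ (1 - a) * |f' t|)| ^ p * f x)
      (fun x : ℝ => |2 - a| ^ (-p) * f x ^ (1 + p * (2 - a))) (intIoo xi xf) := by
    intro x hx
    have ha : 0 < 2 - a := hanti.exponent_pos_of_tendsto_rpow hf_nonneg hx hlim
    dsimp only
    rw [integral_intIoo_rpow_mul_abs_deriv (by linarith) hf' hf'_neg hpos hlim hx (hfin_inner x hx),
      abs_of_pos ha]
    exact abs_rpow_div_rpow_mul_self p (hpos x hx) ha
  rw [setIntegral_congr_fun (measurableSet_intIoo xi xf) hpointwise, integral_const_mul]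

/-- for `b = 1` the down-moment reduces to a power of the Rényi
entropy power: `Ξ_{p,a,1}[f] = |2-a|^{-p} ∫ f^{1+p(2-a)}`. -/
theorem down_moment_b_one_reduces_to_entropy
    (p a : ℝ) (ha : a ≠ 2)
    (xi xf : EReal) (hif : xi < xf)
    (f f' : ℝ → ℝ)
    (hf_meas : Measurable f)
    (hf_nonneg : ∀ x, 0 ≤ f x)
    (hf_supp : ∀ x ∉ intIoo xi xf, f x = 0)
    (hf_int : (∫ x, f x) = 1)
    (hf' : ∀ x ∈ intIoo xi xf, HasDerivAt f (f' x) x)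
    (hf'_neg : ∀ x ∈ intIoo xi xf, f' x < 0)
    (hlim : Tendsto (fun x => f x ^ (2 - a))
      (Filter.comap (fun x : ℝ => (x : EReal)) (𝓝[<] xf)) (𝓝 0))
    (hfin_inner : ∀ x ∈ intIoo xi xf,
      IntegrableOn (fun t => f t ^ (1 - a) * |f' t|) (intIoo (x : EReal) xf))
    (hfin1 : IntegrableOn
      (fun x : ℝ =>
        |(∫ t in intIoo (x : EReal) xf, f t ^ (1 - a) * |f' t|)| ^ p * f x)
      (intIoo xi xf))
    (hfin2 : IntegrableOn (fun x => f x ^ (1 + p * (2 - a))) (intIoo xi xf)) :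
    (∫ x in intIoo xi xf,
        |(∫ t in intIoo (x : EReal) xf, f t ^ (1 - a) * |f' t|)| ^ p * f x)
      = |2 - a| ^ (-p) * ∫ x in intIoo xi xf, f x ^ (1 + p * (2 - a)) :=
  down_moment_b_one_reduces_to_entropy_general p a xi xf f f' hf_nonneg hf' hf'_neg hlim hfin_inner
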